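/- arXiv:1709.06521 — 3 statements merged into one kernel-verified Lean document; each statement's English description precedes it below -/
import Mathlib

section
/- Let Z be a Hermitian 3×3 complex matrix whose real part is positive definite. Then Z has at most one non-positive eigenvalue. -/
/-!
Eigenvectors of `Z` for non-positive eigenvalues span a complex subspace `V` of `ℂⁿ` on which
`x ↦ Re (x* Z x)` is non-positive. If `dim_ℂ V = k` with `2k > n`, then `V`, of real dimension
`2k`, meets the real subspace `ℝⁿ` (cut out by `n` real equations) in some `x ≠ 0`. For real `x`
one has `Re (x* Z x) = xᵀ (Re Z) x > 0`, a contradiction. So `2k ≤ n`, i.e. `k ≤ 1` when `n = 3`.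
-/

open Matrix ComplexOrder
open scoped InnerProductSpace

theorem Orthonormal.inner_sum_smul_map_sum_smul {𝕜 E ι : Type*} [RCLike 𝕜]
    [NormedAddCommGroup E] [InnerProductSpace 𝕜 E] {v : ι → E} (hv : Orthonormal 𝕜 v)
    {T : E →ₗ[𝕜] E} {μ : ι → 𝕜} (hT : ∀ i, T (v i) = μ i • v i) (c : ι → 𝕜) (s : Finset ι) :
    ⟪∑ i ∈ s, c i • v i, T (∑ i ∈ s, c i • v i)⟫_𝕜 = ∑ i ∈ s, μ i * (‖c i‖ : 𝕜) ^ 2 := by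
  simp only [map_sum, map_smul, hT, smul_smul, hv.inner_sum]
  refine Finset.sum_congr rfl fun i _ => ?_
  rw [← RCLike.conj_mul]; ring

theorem Matrix.re_star_dotProduct_mulVec_ofReal {n : Type*} [Fintype n] (Z : Matrix n n ℂ)
    (x : n → ℝ) :
    (star (fun k => (x k : ℂ)) ⬝ᵥ Z *ᵥ fun k => (x k : ℂ)).re = x ⬝ᵥ Z.map Complex.re *ᵥ x := by
  simp [dotProduct, mulVec, Complex.re_sum, Complex.mul_re]

theorem exists_ne_zero_sum_smul_eq_ofReal {ι n : Type*} [Fintype ι] [Fintype n]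
    (v : ι → n → ℂ) (h : Fintype.card n < 2 * Fintype.card ι) :
    ∃ c : ι → ℂ, c ≠ 0 ∧ ∃ x : n → ℝ, ∑ i, c i • v i = fun k => (x k : ℂ) := by
  let L : (ι → ℂ) →ₗ[ℝ] n → ℝ :=
    (LinearMap.compLeft Complex.imLm n) ∘ₗ (Fintype.linearCombination ℂ v).restrictScalars ℝ
  have : LinearMap.ker L ≠ ⊥ := L.ker_ne_bot_of_finrank_lt <| by
    simpa [Module.finrank_pi, Module.finrank_pi_fintype, Complex.finrank_real_complex, mul_comm]
      using h
  obtain ⟨c, hc, hc0⟩ := Submodule.exists_mem_ne_zero_of_ne_bot this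
  refine ⟨c, hc0, fun k => (∑ i, c i • v i) k |>.re, funext fun k => Complex.ext rfl ?_⟩
  simpa [L, Fintype.linearCombination_apply] using congrFun hc k

theorem Matrix.IsHermitian.toLpLin_eigenvectorBasis {𝕜 n : Type*} [RCLike 𝕜] [Fintype n]
    [DecidableEq n] {A : Matrix n n 𝕜} (hA : A.IsHermitian) (i : n) :
    toLpLin 2 2 A (hA.eigenvectorBasis i) = (hA.eigenvalues i : 𝕜) • hA.eigenvectorBasis i := by
  ext1
  simp only [ofLp_toLpLin, toLin'_apply, hA.mulVec_eigenvectorBasis, WithLp.ofLp_smul,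
    RCLike.real_smul_eq_coe_smul (K := 𝕜)]

open Finset in
theorem Matrix.IsHermitian.two_mul_card_eigenvalues_nonpos_le {n : Type*} [Fintype n]
    [DecidableEq n] {Z : Matrix n n ℂ} (hZ : Z.IsHermitian) (hre : (Z.map Complex.re).PosDef) :
    2 * #{i | hZ.eigenvalues i ≤ 0} ≤ Fintype.card n := by
  by_contra! h
  let ι := {i // hZ.eigenvalues i ≤ 0}
  let v : ι → EuclideanSpace ℂ n := fun i => hZ.eigenvectorBasis i
  have hv : Orthonormal ℂ v := hZ.eigenvectorBasis.orthonormal.comp _ Subtype.val_injective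
  obtain ⟨c, hc, x, hx⟩ := exists_ne_zero_sum_smul_eq_ofReal (fun i => ⇑(v i))
    (by rwa [Fintype.card_subtype])
  have hsum : ∑ i, c i • v i = WithLp.toLp 2 fun k => (x k : ℂ) := by
    rw [← hx]; ext1; simp
  have hx0 : x ≠ 0 := by
    rintro rfl
    refine hc (funext <| Fintype.linearIndependent_iff.mp hv.linearIndependent c ?_)
    rw [hsum]; ext; simp
  have hquad : (star (fun k => (x k : ℂ)) ⬝ᵥ Z *ᵥ fun k => (x k : ℂ)) =
      ∑ i : ι, (hZ.eigenvalues i : ℂ) * (‖c i‖ : ℂ) ^ 2 := by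
    have := hv.inner_sum_smul_map_sum_smul (fun i => hZ.toLpLin_eigenvectorBasis i) c univ
    rwa [hsum, toLpLin_toLp, toLin'_apply, EuclideanSpace.inner_toLp_toLp, dotProduct_comm] at this
  have hnonpos : x ⬝ᵥ Z.map Complex.re *ᵥ x ≤ 0 := by
    rw [← Matrix.re_star_dotProduct_mulVec_ofReal, hquad, Complex.re_sum]
    refine sum_nonpos fun i _ => ?_
    norm_cast
    exact mul_nonpos_of_nonpos_of_nonneg i.2 (by positivity)
  exact (hre.dotProduct_mulVec_pos hx0).not_ge (by simpa using hnonpos)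

/-- A Hermitian 3×3 matrix whose (entrywise) real part is positive definite has at most
one non-positive eigenvalue. -/
theorem stmt3 (Z : Matrix (Fin 3) (Fin 3) ℂ) (hZ : Z.IsHermitian)
    (hre : (Matrix.of fun i j => (Z i j).re : Matrix (Fin 3) (Fin 3) ℝ).PosDef) :
    (Finset.univ.filter fun i => hZ.eigenvalues i ≤ 0).card ≤ 1 := by
  have h := hZ.two_mul_card_eigenvalues_nonpos_le hre
  rw [Fintype.card_fin] at h
  omega
end

section
/- Let T, R, Q be the 3×3 matrices T_{il} = C_{i33l}, R_{il} = Σ_j C_{ij3l} ξ̂_j, Q_{il} = Σ_{j,k} C_{ijkl} ξ̂_j ξ̂_k built from a stiffness tensor C satisfying the symmetries C_{ijkl} = C_{jikl} = C_{klij} and the strong convexity condition Σ C_{ijkl} ε_{ij} ε_{kl} ≥ δ Σ ε_{ij}² for all symmetric ε. Then T and Q are symmetric positive definite, and for every real ζ the matrix T ζ² + (R + Rᵀ) ζ + Q is positive definite. -/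
/-!
Testing the quadratic form of a candidate matrix against `a` amounts to evaluating the elastic
energy `Σ C_{ijkl} ε_{ij} ε_{kl}` at the symmetrized gradient `ε = a ⊗ m + m ⊗ a`: by the
symmetries of `C` this energy equals `4 a · A(m) a`, where `A(m)_{il} = Σ_{j,k} C_{ijkl} m_j m_k`.
Strong convexity makes it positive as soon as `a ≠ 0` and `m ≠ 0`. Now `Q = A(ξ̂)`, `T = A(e₃)`
and `T ζ² + (R + Rᵀ) ζ + Q = A(ξ̂ + ζ e₃)`, with `ξ̂ + ζ e₃ ≠ 0` because `ξ̂` is a horizontal unit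
vector.
-/

open Matrix Finset

section Elasticity

variable {ι : Type*}

theorem vecMulVec_add_transpose_ne_zero {a m : ι → ℝ} (ha : a ≠ 0) (hm : m ≠ 0) :
    vecMulVec a m + (vecMulVec a m)ᵀ ≠ 0 := by
  obtain ⟨p, hp⟩ := Function.ne_iff.mp ha
  intro h
  have hentry : ∀ q, a p * m q + m p * a q = 0 := fun q => by
    simpa [vecMulVec_apply] using congrFun (congrFun h p) q
  have hmp : m p = 0 := by
    have : a p * m p = 0 := by linarith [hentry p]
    exact (mul_eq_zero.mp this).resolve_left hp
  exact hm (funext fun q => (mul_eq_zero.mp (by simpa [hmp] using hentry q)).resolve_left hp)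

variable [Fintype ι]

theorem sum_sum_sum_sum_comm {M : Type*} [AddCommMonoid M] (f : ι → ι → ι → ι → M) :
    ∑ i, ∑ j, ∑ k, ∑ l, f i j k l = ∑ k, ∑ l, ∑ i, ∑ j, f i j k l := by
  rw [← Fintype.sum_prod_type' (fun i j => ∑ k, ∑ l, f i j k l),
    ← Fintype.sum_prod_type' (fun k l => ∑ i, ∑ j, f i j k l)]
  simp only [← Fintype.sum_prod_type' (fun k l => f _ _ k l),
    ← Fintype.sum_prod_type' (fun i j => f i j _ _)]
  exact sum_comm

theorem sum_sq_pos_of_ne_zero {ε : Matrix ι ι ℝ} (hε : ε ≠ 0) : 0 < ∑ i, ∑ j, ε i j ^ 2 := by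
  obtain ⟨p, q, hpq⟩ : ∃ p q, ε p q ≠ 0 := by
    by_contra! h
    exact hε (Matrix.ext h)
  exact sum_pos' (fun _ _ => sum_nonneg fun _ _ => sq_nonneg _)
    ⟨p, mem_univ _, sum_pos' (fun _ _ => sq_nonneg _) ⟨q, mem_univ _, by positivity⟩⟩

def elasticForm (C : ι → ι → ι → ι → ℝ) (ε η : Matrix ι ι ℝ) : ℝ :=
  ∑ i, ∑ j, ∑ k, ∑ l, C i j k l * ε i j * η k l

def acousticMatrix (C : ι → ι → ι → ι → ℝ) (m n : ι → ℝ) : Matrix ι ι ℝ :=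
  Matrix.of fun i l => ∑ j, ∑ k, C i j k l * m j * n k

variable {C : ι → ι → ι → ι → ℝ}

theorem elasticForm_add_left (ε ε' η : Matrix ι ι ℝ) :
    elasticForm C (ε + ε') η = elasticForm C ε η + elasticForm C ε' η := by
  simp only [elasticForm, Matrix.add_apply, mul_add, add_mul, sum_add_distrib]

theorem elasticForm_add_right (ε η η' : Matrix ι ι ℝ) :
    elasticForm C ε (η + η') = elasticForm C ε η + elasticForm C ε η' := by
  simp only [elasticForm, Matrix.add_apply, mul_add, sum_add_distrib]

theorem elasticForm_comm (hmaj : ∀ i j k l, C i j k l = C k l i j) (ε η : Matrix ι ι ℝ) :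
    elasticForm C ε η = elasticForm C η ε := by
  rw [elasticForm, sum_sum_sum_sum_comm]
  refine sum_congr rfl fun i _ => sum_congr rfl fun j _ =>
    sum_congr rfl fun k _ => sum_congr rfl fun l _ => ?_
  rw [hmaj]
  ring

theorem elasticForm_transpose_left (hminor : ∀ i j k l, C i j k l = C j i k l)
    (ε η : Matrix ι ι ℝ) : elasticForm C εᵀ η = elasticForm C ε η := by
  rw [elasticForm, sum_comm]
  simp only [transpose_apply, elasticForm, ← hminor]

theorem elasticForm_transpose_right (hminor : ∀ i j k l, C i j k l = C j i k l)
    (hmaj : ∀ i j k l, C i j k l = C k l i j) (ε η : Matrix ι ι ℝ) :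
    elasticForm C ε ηᵀ = elasticForm C ε η := by
  rw [elasticForm_comm hmaj, elasticForm_transpose_left hminor, elasticForm_comm hmaj]

theorem elasticForm_add_transpose_self (hminor : ∀ i j k l, C i j k l = C j i k l)
    (hmaj : ∀ i j k l, C i j k l = C k l i j) (E : Matrix ι ι ℝ) :
    elasticForm C (E + Eᵀ) (E + Eᵀ) = 4 * elasticForm C E Eᵀ := by
  have hE := elasticForm_transpose_right hminor hmaj E E
  simp only [elasticForm_add_left, elasticForm_add_right, elasticForm_transpose_left hminor]
  linarith

theorem elasticForm_vecMulVec (a m : ι → ℝ) :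
    elasticForm C (vecMulVec a m) (vecMulVec a m)ᵀ = a ⬝ᵥ acousticMatrix C m m *ᵥ a := by
  simp only [elasticForm, acousticMatrix, dotProduct, mulVec, of_apply, vecMulVec_apply,
    transpose_apply, mul_sum, sum_mul]
  refine sum_congr rfl fun i _ => ?_
  conv_rhs => rw [sum_comm]
  refine sum_congr rfl fun j _ => ?_
  conv_rhs => rw [sum_comm]
  refine sum_congr rfl fun k _ => sum_congr rfl fun l _ => ?_
  ring

theorem acousticMatrix_transpose (hminor : ∀ i j k l, C i j k l = C j i k l)
    (hmaj : ∀ i j k l, C i j k l = C k l i j) (m n : ι → ℝ) :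
    (acousticMatrix C m n)ᵀ = acousticMatrix C n m := by
  ext i l
  simp only [acousticMatrix, transpose_apply, of_apply]
  rw [sum_comm]
  refine sum_congr rfl fun k _ => sum_congr rfl fun j _ => ?_
  rw [hmaj, hminor, hmaj, hminor, hmaj]
  ring

theorem acousticMatrix_add_smul (m n : ι → ℝ) (ζ : ℝ) :
    acousticMatrix C (m + ζ • n) (m + ζ • n) =
      ζ ^ 2 • acousticMatrix C n n + ζ • (acousticMatrix C m n + acousticMatrix C n m) +
        acousticMatrix C m m := by
  ext i l
  simp only [acousticMatrix, Matrix.add_apply, Matrix.smul_apply, of_apply, Pi.add_apply,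
    Pi.smul_apply, smul_eq_mul, mul_sum, ← sum_add_distrib]
  refine sum_congr rfl fun j _ => sum_congr rfl fun k _ => ?_
  ring

theorem acousticMatrix_posDef (hminor : ∀ i j k l, C i j k l = C j i k l)
    (hmaj : ∀ i j k l, C i j k l = C k l i j) {δ : ℝ} (hδ : 0 < δ)
    (hconv : ∀ ε : Matrix ι ι ℝ, ε.IsSymm → δ * ∑ i, ∑ j, ε i j ^ 2 ≤ elasticForm C ε ε)
    {m : ι → ℝ} (hm : m ≠ 0) : (acousticMatrix C m m).PosDef := by
  refine .of_dotProduct_mulVec_pos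
    (isHermitian_iff_isSymm.mpr (acousticMatrix_transpose hminor hmaj m m)) fun a ha => ?_
  have hpos := (mul_pos hδ <| sum_sq_pos_of_ne_zero <|
    vecMulVec_add_transpose_ne_zero ha hm).trans_le (hconv _ (isSymm_add_transpose_self _))
  rw [elasticForm_add_transpose_self hminor hmaj, elasticForm_vecMulVec] at hpos
  simpa using hpos

end Elasticity

/-- For a stiffness tensor `C` with the full symmetries and the strong-convexity property,
the matrices `T_{il} = C_{i33l}`, `R_{il} = Σ_j C_{ij3l} ξ̂_j`,
`Q_{il} = Σ_{j,k} C_{ijkl} ξ̂_j ξ̂_k` (with `ξ̂` a horizontal unit vector) satisfy: `T` and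
`Q` are symmetric positive definite, and `T ζ² + (R + Rᵀ) ζ + Q` is positive definite for
every real `ζ`. -/
theorem stmt14 (C : Fin 3 → Fin 3 → Fin 3 → Fin 3 → ℝ) (δ : ℝ) (hδ : 0 < δ)
    (hsym1 : ∀ i j k l, C i j k l = C j i k l)
    (hsym2 : ∀ i j k l, C i j k l = C k l i j)
    (hconv : ∀ ε : Matrix (Fin 3) (Fin 3) ℝ, ε.IsSymm →
      δ * ∑ i, ∑ j, (ε i j) ^ 2 ≤ ∑ i, ∑ j, ∑ k, ∑ l, C i j k l * ε i j * ε k l)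
    (ξ : Fin 3 → ℝ) (hξ3 : ξ 2 = 0) (hξunit : ∑ i, (ξ i) ^ 2 = 1)
    (T R Q : Matrix (Fin 3) (Fin 3) ℝ)
    (hT : T = Matrix.of fun i l => C i 2 2 l)
    (hR : R = Matrix.of fun i l => ∑ j, C i j 2 l * ξ j)
    (hQ : Q = Matrix.of fun i l => ∑ j, ∑ k, C i j k l * ξ j * ξ k) :
    T.IsSymm ∧ T.PosDef ∧ Q.IsSymm ∧ Q.PosDef ∧
    ∀ ζ : ℝ, (ζ ^ 2 • T + ζ • (R + Rᵀ) + Q).PosDef := by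
  set e₃ : Fin 3 → ℝ := Pi.single 2 1
  have hTe : T = acousticMatrix C e₃ e₃ := by
    ext i l
    simp [hT, acousticMatrix, e₃, Pi.single_apply]
  have hRe : R = acousticMatrix C ξ e₃ := by
    ext i l
    simp [hR, acousticMatrix, e₃, Pi.single_apply]
  have hQξ : Q = acousticMatrix C ξ ξ := hQ
  have hξ : ξ ≠ 0 := by
    rintro rfl
    simp at hξunit
  have hξe : ∀ ζ : ℝ, ξ + ζ • e₃ ≠ 0 := fun ζ h => hξ <| by
    have hζ : ζ = 0 := by simpa [e₃, hξ3] using congrFun h 2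
    simpa [hζ] using h
  have posDef := fun {m} => acousticMatrix_posDef (m := m) hsym1 hsym2 hδ hconv
  refine ⟨hTe ▸ acousticMatrix_transpose hsym1 hsym2 _ _, hTe ▸ posDef (by simp [e₃]),
    hQξ ▸ acousticMatrix_transpose hsym1 hsym2 _ _, hQξ ▸ posDef hξ, fun ζ => ?_⟩
  rw [hTe, hRe, hQξ, acousticMatrix_transpose hsym1 hsym2, ← acousticMatrix_add_smul]
  exact posDef (hξe ζ)
end

section
/- In the isotropic case C_{ijkl} = λ̂ δ_{ij}δ_{kl} + μ̂ (δ_{ik}δ_{jl} + δ_{il}δ_{jk}) with μ̂ > 0 and λ̂ + 2μ̂ > 0, the limiting velocity equals √μ̂: the smallest v > 0 for which det Q(ϱ; v) = 0 for some rotation angle ϱ is v = √μ̂, where Q(ϱ; v)_{il} = Σ_{j,k} (C_{ijkl} - v² ξ̂_j ξ̂_k δ_{il}) m_j(ϱ) m_k(ϱ) and m(ϱ) = ξ̂ cos ϱ + e₃ sin ϱ. -/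
open Matrix

set_option maxHeartbeats 1000000 in
/-- Determinant formula in the isotropic case. -/
lemma det_formula_aux (lam mu v : ℝ)
    (C : Fin 3 → Fin 3 → Fin 3 → Fin 3 → ℝ)
    (hC : ∀ i j k l, C i j k l =
      lam * (if i = j then 1 else 0) * (if k = l then 1 else 0) +
        mu * ((if i = k then 1 else 0) * (if j = l then 1 else 0) +
          (if i = l then 1 else 0) * (if j = k then 1 else 0)))
    (ξ : Fin 3 → ℝ) (hξ3 : ξ 2 = 0) (hξunit : ∑ i, (ξ i) ^ 2 = 1)
    (m : ℝ → Fin 3 → ℝ)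
    (hm : ∀ ϱ j, m ϱ j = Real.cos ϱ * ξ j + Real.sin ϱ * (if j = 2 then (1 : ℝ) else 0))
    (ϱ : ℝ) :
    (Matrix.of fun i l => ∑ j, ∑ k,
          (C i j k l - v ^ 2 * ξ j * ξ k * (if i = l then (1 : ℝ) else 0)) *
            m ϱ j * m ϱ k).det
      = (mu - v ^ 2 * Real.cos ϱ ^ 2) ^ 2 *
          (lam + 2 * mu - v ^ 2 * Real.cos ϱ ^ 2) := by
  have hS : ξ 0 ^ 2 + ξ 1 ^ 2 = 1 := by
    have := hξunit
    rw [Fin.sum_univ_three, hξ3] at this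
    linarith
  have hcs : Real.sin ϱ ^ 2 + Real.cos ϱ ^ 2 = 1 := Real.sin_sq_add_cos_sq ϱ
  have hξ3' : ξ ⟨2, by norm_num⟩ = 0 := hξ3
  have hmnorm : m ϱ 0 ^ 2 + m ϱ 1 ^ 2 + m ϱ 2 ^ 2 = 1 := by
    simp only [hm, hξ3]
    norm_num [Fin.ext_iff]
    linear_combination Real.cos ϱ ^ 2 * hS + hcs
  have hN : (Matrix.of fun i l => ∑ j, ∑ k,
          (C i j k l - v ^ 2 * ξ j * ξ k * (if i = l then (1 : ℝ) else 0)) *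
            m ϱ j * m ϱ k)
      = Matrix.of (fun i l => (lam + mu) * m ϱ i * m ϱ l +
          (mu - v ^ 2 * Real.cos ϱ ^ 2) * (if i = l then (1 : ℝ) else 0)) := by
    ext i l
    simp only [Matrix.of_apply, Fin.sum_univ_three, hC, hm, hξ3]
    fin_cases i <;> fin_cases l <;>
      norm_num [Fin.ext_iff, hξ3'] <;>
    first
      | ring1
      | linear_combination
          (mu * Real.cos ϱ ^ 2 - v ^ 2 * Real.cos ϱ ^ 2 * (ξ 0 ^ 2 + ξ 1 ^ 2 + 1)) * hS +
            mu * hcs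
      | linear_combination
          (v ^ 2 * Real.cos ϱ ^ 2 * (ξ 0 ^ 2 + ξ 1 ^ 2 + 1) - mu * Real.cos ϱ ^ 2) * hS -
            mu * hcs
  rw [hN, Matrix.det_fin_three]
  simp only [Matrix.of_apply]
  norm_num [Fin.ext_iff]
  linear_combination
    (lam + mu) * (mu - v ^ 2 * Real.cos ϱ ^ 2) ^ 2 * hmnorm

/-- In the isotropic case, the limiting velocity equals `√μ̂`: the smallest `v > 0` for
which `det Q(ϱ; v) = 0` for some rotation angle `ϱ` is `v = √μ̂`. -/
theorem stmt15 (lam mu : ℝ) (hmu : 0 < mu) (hconv : 0 < 3 * lam + 2 * mu)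
    (C : Fin 3 → Fin 3 → Fin 3 → Fin 3 → ℝ)
    (hC : ∀ i j k l, C i j k l =
      lam * (if i = j then 1 else 0) * (if k = l then 1 else 0) +
        mu * ((if i = k then 1 else 0) * (if j = l then 1 else 0) +
          (if i = l then 1 else 0) * (if j = k then 1 else 0)))
    (ξ : Fin 3 → ℝ) (hξ3 : ξ 2 = 0) (hξunit : ∑ i, (ξ i) ^ 2 = 1)
    (m : ℝ → Fin 3 → ℝ)
    (hm : ∀ ϱ j, m ϱ j = Real.cos ϱ * ξ j + Real.sin ϱ * (if j = 2 then (1 : ℝ) else 0)) :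
    IsLeast {v : ℝ | 0 < v ∧ ∃ ϱ : ℝ,
        (Matrix.of fun i l => ∑ j, ∑ k,
          (C i j k l - v ^ 2 * ξ j * ξ k * (if i = l then (1 : ℝ) else 0)) *
            m ϱ j * m ϱ k).det = 0}
      (Real.sqrt mu) := by
  constructor
  · refine ⟨Real.sqrt_pos.mpr hmu, 0, ?_⟩
    rw [det_formula_aux lam mu _ C hC ξ hξ3 hξunit m hm 0]
    rw [Real.sq_sqrt hmu.le, Real.cos_zero]
    ring
  · rintro v ⟨hv, ϱ, hdet⟩
    rw [det_formula_aux lam mu v C hC ξ hξ3 hξunit m hm ϱ] at hdet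
    have hc2 : Real.cos ϱ ^ 2 ≤ 1 := Real.cos_sq_le_one ϱ
    have hv2 : mu ≤ v ^ 2 := by
      rcases mul_eq_zero.mp hdet with h | h
      · have h' : mu = v ^ 2 * Real.cos ϱ ^ 2 := by
          have := pow_eq_zero_iff (n := 2) (by norm_num) |>.mp h
          linarith
        nlinarith [sq_nonneg v]
      · nlinarith [sq_nonneg v]
    calc Real.sqrt mu ≤ Real.sqrt (v ^ 2) := Real.sqrt_le_sqrt hv2
      _ = v := by rw [Real.sqrt_sq hv.le]
end
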